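/- arXiv:2308.00696 — 2 statements merged into one kernel-verified Lean document; each statement's English description precedes it below -/
import Mathlib

section
/- Let D : X × X → [0,∞] be jointly convex and 𝔉 ⊆ X convex, and set F(ρ) = inf_{σ∈𝔉} D(ρ,σ). Suppose (ρ_n) ⊆ X, (ω_n) ⊆ 𝔉, lim_n D(ρ_n, ω_n) = D(ρ_0, ω_0) < ∞ with ω_0 ∈ 𝔉, and suppose that for every σ ∈ 𝔉 and every λ ∈ (0,1), lim_n D(ρ_n, (1−λ)σ + λω_n) = D(ρ_0, (1−λ)σ + λω_0) < ∞. Then limsup_n F(ρ_n) ≤ F(ρ_0). -/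
open Set Filter Topology

/-- Let `D` be jointly convex, `𝔉 ⊆ X` convex, `F ρ = inf_{σ∈𝔉} D ρ σ`. If
`lim_n D (ρ n) (ω n) = D ρ₀ ω₀ < ∞` with `ω n, ω₀ ∈ 𝔉`, and for every `σ ∈ 𝔉` and
`λ ∈ (0,1)` one has `lim_n D (ρ n) ((1−λ)σ + λ ω n) = D ρ₀ ((1−λ)σ + λ ω₀) < ∞`, then
`limsup_n F (ρ n) ≤ F ρ₀`. -/
theorem limsup_inf_relEntropyDist_le {V : Type*} [AddCommGroup V] [Module ℝ V]
    [TopologicalSpace V]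
    (X : Set V) (hX : Convex ℝ X)
    (D : V → V → ENNReal)
    (hD : ∀ t : ℝ, t ∈ Icc (0:ℝ) 1 → ∀ ρ₁ ρ₂ σ₁ σ₂ : V,
        ρ₁ ∈ X → ρ₂ ∈ X → σ₁ ∈ X → σ₂ ∈ X →
        D (t • ρ₁ + (1 - t) • ρ₂) (t • σ₁ + (1 - t) • σ₂) ≤
          ENNReal.ofReal t * D ρ₁ σ₁ + ENNReal.ofReal (1 - t) * D ρ₂ σ₂)
    (𝔉 : Set V) (h𝔉X : 𝔉 ⊆ X) (h𝔉 : Convex ℝ 𝔉)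
    (ρ : ℕ → V) (ρ₀ : V) (hρ : ∀ n, ρ n ∈ X) (hρ₀ : ρ₀ ∈ X)
    (ω : ℕ → V) (ω₀ : V) (hω : ∀ n, ω n ∈ 𝔉) (hω₀ : ω₀ ∈ 𝔉)
    (hfin : D ρ₀ ω₀ < ⊤)
    (hconv : Tendsto (fun n => D (ρ n) (ω n)) atTop (𝓝 (D ρ₀ ω₀)))
    (hmix : ∀ σ ∈ 𝔉, ∀ l ∈ Ioo (0:ℝ) 1,
        D ρ₀ ((1 - l) • σ + l • ω₀) < ⊤ ∧
        Tendsto (fun n => D (ρ n) ((1 - l) • σ + l • ω n)) atTop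
          (𝓝 (D ρ₀ ((1 - l) • σ + l • ω₀)))) :
    Filter.limsup (fun n => ⨅ σ ∈ 𝔉, D (ρ n) σ) atTop ≤ ⨅ σ ∈ 𝔉, D ρ₀ σ := by
  have key : ∀ σ ∈ 𝔉, ∀ l ∈ Ioo (0:ℝ) 1,
      Filter.limsup (fun n => ⨅ σ' ∈ 𝔉, D (ρ n) σ') atTop ≤
        ENNReal.ofReal l * D ρ₀ ω₀ + ENNReal.ofReal (1 - l) * D ρ₀ σ := by
    intro σ hσ l hl
    obtain ⟨hl0, hl1⟩ := hl
    obtain ⟨hfin', htend⟩ := hmix σ hσ l ⟨hl0, hl1⟩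
    have hmem : ∀ n, (1 - l) • σ + l • ω n ∈ 𝔉 := fun n =>
      h𝔉 hσ (hω n) (by linarith) hl0.le (by ring)
    have h1 : Filter.limsup (fun n => ⨅ σ' ∈ 𝔉, D (ρ n) σ') atTop ≤
        Filter.limsup (fun n => D (ρ n) ((1 - l) • σ + l • ω n)) atTop := by
      refine limsup_le_limsup (Eventually.of_forall fun n => iInf₂_le _ (hmem n))
        (by isBoundedDefault) (by isBoundedDefault)
    rw [htend.limsup_eq] at h1
    refine h1.trans ?_
    have h2 := hD l ⟨hl0.le, hl1.le⟩ ρ₀ ρ₀ ω₀ σ hρ₀ hρ₀ (h𝔉X hω₀) (h𝔉X hσ)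
    have e1 : l • ρ₀ + (1 - l) • ρ₀ = ρ₀ := by
      rw [← add_smul]; simp
    have e2 : l • ω₀ + (1 - l) • σ = (1 - l) • σ + l • ω₀ := add_comm _ _
    rw [e1, e2] at h2
    exact h2
  refine le_iInf₂ fun σ hσ => ?_
  -- use l = 1/(n+2) and take n → ∞
  have hlmem : ∀ n : ℕ, (1 : ℝ) / (n + 2) ∈ Ioo (0:ℝ) 1 := by
    intro n
    constructor
    · positivity
    · rw [div_lt_one (by positivity)]
      have : (0:ℝ) ≤ (n:ℝ) := Nat.cast_nonneg n
      linarith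
  have htend0 : Tendsto (fun n : ℕ =>
      ENNReal.ofReal ((1:ℝ) / (n + 2)) * D ρ₀ ω₀ +
        ENNReal.ofReal (1 - (1:ℝ) / (n + 2)) * D ρ₀ σ) atTop
      (𝓝 (0 * D ρ₀ ω₀ + 1 * D ρ₀ σ)) := by
    apply Tendsto.add
    · apply ENNReal.Tendsto.mul_const _ (Or.inr hfin.ne)
      have : Tendsto (fun n : ℕ => (1:ℝ) / (n + 2)) atTop (𝓝 0) := by
        simp only [one_div]
        exact tendsto_inv_atTop_zero.comp
          (tendsto_atTop_add_const_right atTop 2 tendsto_natCast_atTop_atTop)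
      simpa using (ENNReal.tendsto_ofReal this)
    · apply ENNReal.Tendsto.mul_const _ (Or.inl one_ne_zero)
      have : Tendsto (fun n : ℕ => 1 - (1:ℝ) / (n + 2)) atTop (𝓝 (1 - 0)) := by
        have h0 : Tendsto (fun n : ℕ => (1:ℝ) / (n + 2)) atTop (𝓝 0) := by
          simp only [one_div]
          exact tendsto_inv_atTop_zero.comp
            (tendsto_atTop_add_const_right atTop 2 tendsto_natCast_atTop_atTop)
        exact h0.const_sub 1
      simpa using (ENNReal.tendsto_ofReal this)
  simp only [zero_mul, one_mul, zero_add] at htend0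
  exact ge_of_tendsto' htend0 fun n => key σ hσ _ (hlmem n)
end

section
/- Monotonicity of relative entropy under partial trace in finite dimensions: for density matrices ρ, σ on H_A ⊗ H_B, D(Tr_B ρ ‖ Tr_B σ) ≤ D(ρ ‖ σ). -/
open Matrix Kronecker ComplexOrder

/-- Matrix logarithm via the continuous functional calculus (acting on the eigenvalues of a
Hermitian matrix). -/
noncomputable def matLog {n : Type*} [Fintype n] [DecidableEq n] (A : Matrix n n ℂ) :
    Matrix n n ℂ :=
  cfc Real.log A

/-- Lindblad's extension of the quantum relative entropy:
`D(A‖B) = Tr[A (log A − log B)] + Tr B − Tr A`. -/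
noncomputable def relEnt {n : Type*} [Fintype n] [DecidableEq n] (A B : Matrix n n ℂ) : ℝ :=
  ((A * (matLog A - matLog B)).trace + B.trace - A.trace).re

/-- Von Neumann entropy `S(ρ) = −Tr[ρ log ρ]`. -/
noncomputable def vnEntropy {n : Type*} [Fintype n] [DecidableEq n] (A : Matrix n n ℂ) : ℝ :=
  -((A * matLog A).trace.re)

/-- Support containment `supp A ⊆ supp B`, expressed via kernels (for positive semidefinite
matrices, `supp A ⊆ supp B` is equivalent to `ker B ⊆ ker A`). -/
def suppLE {n : Type*} [Fintype n] [DecidableEq n] (A B : Matrix n n ℂ) : Prop :=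
  ∀ v : n → ℂ, B.mulVec v = 0 → A.mulVec v = 0

/-- Partial trace over the second tensor factor. -/
noncomputable def ptraceB {a b : Type*} [Fintype a] [Fintype b]
    (ρ : Matrix (a × b) (a × b) ℂ) : Matrix a a ℂ :=
  Matrix.of fun i j => ∑ k : b, ρ (i, k) (j, k)

/-- Partial trace over the first tensor factor. -/
noncomputable def ptraceA {a b : Type*} [Fintype a] [Fintype b]
    (ρ : Matrix (a × b) (a × b) ℂ) : Matrix b b ℂ :=
  Matrix.of fun i j => ∑ k : a, ρ (k, i) (k, j)

/-- The quantum relative entropy with the support convention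
(`D(ρ‖σ) = +∞` unless `supp ρ ⊆ supp σ`), with values in the extended reals. -/
noncomputable def relEntE {n : Type*} [Fintype n] [DecidableEq n]
    (ρ σ : Matrix n n ℂ) : EReal :=
  open scoped Classical in
  if suppLE ρ σ then ((relEnt ρ σ : ℝ) : EReal) else ⊤

/-!
In the eigenbases `(v_l)` of `ρ` and `(u_k)` of `σ`, with eigenvalues `ν_l`, `μ_k`, one has
`D(ρ‖σ) = ∑ ν_l |⟪u_k, v_l⟫|² (log ν_l − log μ_k) + Tr σ − Tr ρ`, and
`log ν − log μ = ∫₀^∞ (ν / (μ + sν) − 1 / (1 + s)) ds` turns this into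
`D(ρ‖σ) = ∫₀^∞ (Φ_s(ρ, σ) − Tr ρ / (1 + s)) ds + Tr σ − Tr ρ` with
`Φ_s(ρ, σ) = ∑ ν_l² |⟪u_k, v_l⟫|² / (μ_k + sν_l) = ⟪ρ, (L_σ + s R_ρ)⁻¹ ρ⟫`.
Completing the square entrywise shows `Φ_s(ρ, σ) = sup_Y (2 Re Tr[Y†ρ] − Tr[Y†σY] − s Tr[Y†Yρ])`.
For `Y = X ⊗ 1` the expression under the supremum is the one for `Tr_B ρ`, `Tr_B σ` and `X`,
so `Φ_s` can only decrease under the partial trace, while `Tr ρ` and `Tr σ` are preserved.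
-/

open MeasureTheory Filter

lemma Complex.star_mul_self_eq_norm_sq (z : ℂ) : star z * z = (‖z‖ : ℂ) ^ 2 :=
  Complex.conj_mul' z

section Scalar

open Set

lemma integrableOn_div_add_mul_sub_one_div {μ ν : ℝ} (hμ : 0 < μ) (hν : 0 < ν) :
    IntegrableOn (fun s => ν / (μ + s * ν) - 1 / (1 + s)) (Ioi 0) := by
  set m := min μ ν
  have hm : 0 < m := lt_min hμ hν
  refine Integrable.mono' ((integrable_inv_one_add_sq.const_mul (|ν - μ| / m)).integrableOn)
    ((ContinuousOn.aestronglyMeasurable (fun s (hs : 0 < s) => ?_) measurableSet_Ioi)) ?_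
  · have : 0 < μ + s * ν := by positivity
    exact (ContinuousAt.sub (by fun_prop (disch := positivity))
      (by fun_prop (disch := positivity))).continuousWithinAt
  filter_upwards [ae_restrict_mem measurableSet_Ioi] with s (hs : 0 < s)
  have hden : m * (1 + s ^ 2) ≤ (μ + s * ν) * (1 + s) := by
    nlinarith [min_le_left μ ν, min_le_right μ ν]
  rw [div_sub_div _ _ (by positivity) (by positivity), Real.norm_eq_abs, abs_div,
    abs_of_pos (by positivity : 0 < (μ + s * ν) * (1 + s)), div_le_iff₀ (by positivity)]
  calc |ν * (1 + s) - (μ + s * ν) * 1| = |ν - μ| / m * (1 + s ^ 2)⁻¹ * (m * (1 + s ^ 2)) := by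
        field_simp; ring_nf
    _ ≤ _ := by gcongr

lemma integral_div_add_mul_sub_one_div {μ ν : ℝ} (hμ : 0 < μ) (hν : 0 < ν) :
    ∫ s in Ioi 0, (ν / (μ + s * ν) - 1 / (1 + s)) = Real.log ν - Real.log μ := by
  have hderiv : ∀ s ∈ Ici (0 : ℝ), HasDerivAt
      (fun s => Real.log (μ + s * ν) - Real.log (1 + s)) (ν / (μ + s * ν) - 1 / (1 + s)) s := by
    intro s (hs : 0 ≤ s)
    have d₁ : HasDerivAt (fun s => μ + s * ν) ν s := by
      simpa using ((hasDerivAt_id s).mul_const ν).const_add μ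
    have d₂ : HasDerivAt (fun s => 1 + s) 1 s := by simpa using (hasDerivAt_id s).const_add 1
    exact (d₁.log (by positivity)).sub (d₂.log (by positivity))
  have hlim : Tendsto (fun s => Real.log (μ + s * ν) - Real.log (1 + s)) atTop
      (nhds (Real.log ν)) := by
    have hquot : Tendsto (fun s : ℝ => (μ * s⁻¹ + ν) / (s⁻¹ + 1)) atTop (nhds ν) := by
      have := ((tendsto_inv_atTop_zero.const_mul μ).add_const ν).div
        (tendsto_inv_atTop_zero.add_const 1) (by norm_num)
      rwa [mul_zero, zero_add, zero_add, div_one] at this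
    refine ((Real.continuousAt_log hν.ne').tendsto.comp hquot).congr' ?_
    filter_upwards [eventually_gt_atTop 0] with s hs
    rw [Function.comp_apply, ← Real.log_div (by positivity) (by positivity)]
    congr 1
    field_simp
  simpa using integral_Ioi_of_hasDerivAt_of_tendsto' (a := 0) (fun s hs => hderiv s hs)
    (integrableOn_div_add_mul_sub_one_div hμ hν) hlim

lemma Complex.two_mul_re_sub_le_norm_sq_div {d : ℝ} {x : ℂ} (hd : 0 ≤ d) (hx : d = 0 → x = 0)
    (z : ℂ) :
    2 * (star z * x).re - d * ‖z‖ ^ 2 ≤ ‖x‖ ^ 2 / d := by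
  rcases hd.eq_or_lt with rfl | hd
  · simp [hx rfl]
  · have hre : (star z * x).re ≤ ‖z‖ * ‖x‖ := by
      simpa using Complex.re_le_norm (star z * x)
    rw [le_div_iff₀ hd]
    nlinarith [sq_nonneg (d * ‖z‖ - ‖x‖)]

-- For `d = 0` both sides vanish, as `x / 0 = 0`.
lemma Complex.two_mul_re_sub_eq_norm_sq_div (x : ℂ) (d : ℝ) :
    2 * (star (x / d) * x).re - d * ‖x / d‖ ^ 2 = ‖x‖ ^ 2 / d := by
  rcases eq_or_ne d 0 with rfl | hd
  · simp
  · rw [star_div₀, div_mul_eq_mul_div, Complex.star_mul_self_eq_norm_sq, Complex.star_def,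
      Complex.conj_ofReal, ← Complex.ofReal_pow, Complex.div_ofReal_re, Complex.ofReal_re,
      norm_div, Complex.norm_real, Real.norm_eq_abs, div_pow, sq_abs]
    field_simp
    ring

end Scalar

section TraceFormulas

variable {n : Type*} [Fintype n]

lemma trace_star_mul_eq_sum (A B : Matrix n n ℂ) :
    (star A * B).trace = ∑ k, ∑ l, star (A k l) * B k l := by
  simp only [Matrix.trace, diag_apply, mul_apply, star_apply]
  exact Finset.sum_comm

variable [DecidableEq n] {U V : Matrix n n ℂ}

lemma star_mul_cancel_left_of_mem_unitaryGroup (hU : U ∈ unitaryGroup n ℂ) (A : Matrix n n ℂ) :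
    star U * (U * A) = A := by
  rw [← Matrix.mul_assoc, mem_unitaryGroup_iff'.mp hU, Matrix.one_mul]

lemma trace_conj_of_mem_unitaryGroup (hV : V ∈ unitaryGroup n ℂ) (M : Matrix n n ℂ) :
    (V * M * star V).trace = M.trace := by
  rw [Matrix.trace_mul_cycle, mem_unitaryGroup_iff'.mp hV, Matrix.one_mul]

lemma sum_norm_sq_apply_of_mem_unitaryGroup (hV : V ∈ unitaryGroup n ℂ) (l : n) :
    ∑ k, ‖V k l‖ ^ 2 = 1 := by
  have h : (star V * V) l l = (1 : Matrix n n ℂ) l l := by rw [mem_unitaryGroup_iff'.mp hV]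
  simp only [mul_apply, one_apply_eq, star_apply, Complex.star_mul_self_eq_norm_sq] at h
  exact_mod_cast h

lemma trace_conj_diagonal_mul_conj_diagonal (a b : n → ℝ) :
    ((V * diagonal (RCLike.ofReal ∘ a) * star V) *
        (U * diagonal (RCLike.ofReal ∘ b) * star U)).trace =
      ((∑ k, ∑ l, a l * ‖(star U * V) k l‖ ^ 2 * b k : ℝ) : ℂ) := by
  have h : ((V * diagonal (RCLike.ofReal ∘ a) * star V) *
        (U * diagonal (RCLike.ofReal ∘ b) * star U)).trace =
      (star (star U * V) *
        (diagonal (RCLike.ofReal ∘ b) * (star U * V) * diagonal (RCLike.ofReal ∘ a))).trace := by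
    simp only [Matrix.mul_assoc, star_mul, star_star]
    rw [Matrix.trace_mul_comm V, Matrix.mul_assoc, Matrix.trace_mul_comm (diagonal _)]
    simp only [Matrix.mul_assoc]
  rw [h, trace_star_mul_eq_sum]
  push_cast
  refine Finset.sum_congr rfl fun k _ => Finset.sum_congr rfl fun l _ => ?_
  simp only [diagonal_mul, mul_diagonal, Function.comp_apply, Complex.coe_algebraMap]
  rw [← Complex.star_mul_self_eq_norm_sq]
  ring

/-- Its supremum over `Y` is `⟪ρ, (L_σ + s R_ρ)⁻¹ ρ⟫`, with `L_σ`, `R_ρ` left and right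
multiplication on Hilbert–Schmidt space. -/
def resolventForm (s : ℝ) (ρ σ Y : Matrix n n ℂ) : ℝ :=
  2 * (star Y * ρ).trace.re - (star Y * σ * Y).trace.re - s * (star Y * Y * ρ).trace.re

lemma resolventForm_conj (hU : U ∈ unitaryGroup n ℂ) (hV : V ∈ unitaryGroup n ℂ)
    (μ ν : n → ℝ) (s : ℝ) (Z : Matrix n n ℂ) :
    resolventForm s (V * diagonal (RCLike.ofReal ∘ ν) * star V)
        (U * diagonal (RCLike.ofReal ∘ μ) * star U) (U * Z * star V) =
      ∑ k, ∑ l, (2 * (star (Z k l) * ((star U * V) k l * ν l)).re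
        - (μ k + s * ν l) * ‖Z k l‖ ^ 2) := by
  have h₁ : star (U * Z * star V) * (V * diagonal (RCLike.ofReal ∘ ν) * star V) =
      V * (star Z * (star U * V * diagonal (RCLike.ofReal ∘ ν))) * star V := by
    simp only [star_mul, star_star, Matrix.mul_assoc]
  have h₂ : star (U * Z * star V) * (U * diagonal (RCLike.ofReal ∘ μ) * star U) *
      (U * Z * star V) = V * (star Z * (diagonal (RCLike.ofReal ∘ μ) * Z)) * star V := by
    simp only [star_mul, star_star, Matrix.mul_assoc, star_mul_cancel_left_of_mem_unitaryGroup hU]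
  have h₃ : star (U * Z * star V) * (U * Z * star V) *
      (V * diagonal (RCLike.ofReal ∘ ν) * star V) =
      V * (star Z * (Z * diagonal (RCLike.ofReal ∘ ν))) * star V := by
    simp only [star_mul, star_star, Matrix.mul_assoc, star_mul_cancel_left_of_mem_unitaryGroup hU,
      star_mul_cancel_left_of_mem_unitaryGroup hV]
  rw [resolventForm, h₁, h₂, h₃]
  simp only [trace_conj_of_mem_unitaryGroup hV, trace_star_mul_eq_sum, diagonal_mul, mul_diagonal,
    Function.comp_apply, Complex.coe_algebraMap, Complex.re_sum, Finset.mul_sum,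
    ← Finset.sum_sub_distrib]
  refine Finset.sum_congr rfl fun k _ => Finset.sum_congr rfl fun l _ => ?_
  rw [mul_left_comm _ (μ k : ℂ), ← mul_assoc (star (Z k l)) (Z k l),
    Complex.star_mul_self_eq_norm_sq]
  simp only [← Complex.ofReal_pow, ← Complex.ofReal_mul, Complex.ofReal_re]
  ring

end TraceFormulas

section Spectral

variable {n : Type*} [Fintype n] [DecidableEq n] {ρ σ : Matrix n n ℂ}

lemma Matrix.IsHermitian.eq_conj_diagonal (hρ : ρ.IsHermitian) :
    ρ = (hρ.eigenvectorUnitary : Matrix n n ℂ) * diagonal (RCLike.ofReal ∘ hρ.eigenvalues) *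
      star (hρ.eigenvectorUnitary : Matrix n n ℂ) := by
  conv_lhs => rw [hρ.spectral_theorem, Unitary.conjStarAlgAut_apply]

lemma Matrix.IsHermitian.matLog_eq (hρ : ρ.IsHermitian) :
    matLog ρ = (hρ.eigenvectorUnitary : Matrix n n ℂ) *
      diagonal (RCLike.ofReal ∘ Real.log ∘ hρ.eigenvalues) *
      star (hρ.eigenvectorUnitary : Matrix n n ℂ) := by
  rw [matLog, hρ.cfc_eq, IsHermitian.cfc, Unitary.conjStarAlgAut_apply]

noncomputable def eigenOverlap (hσ : σ.IsHermitian) (hρ : ρ.IsHermitian) : Matrix n n ℂ :=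
  star (hσ.eigenvectorUnitary : Matrix n n ℂ) * hρ.eigenvectorUnitary

variable (hρ : ρ.IsHermitian) (hσ : σ.IsHermitian)

lemma sum_norm_sq_eigenOverlap (l : n) : ∑ k, ‖eigenOverlap hσ hρ k l‖ ^ 2 = 1 :=
  sum_norm_sq_apply_of_mem_unitaryGroup
    (Submonoid.mul_mem _ (Unitary.star_mem hσ.eigenvectorUnitary.2) hρ.eigenvectorUnitary.2) l

lemma re_trace_eq_sum_eigenOverlap :
    ρ.trace.re = ∑ k, ∑ l, hρ.eigenvalues l * ‖eigenOverlap hσ hρ k l‖ ^ 2 := by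
  rw [Finset.sum_comm, hρ.trace_eq_sum_eigenvalues, Complex.re_sum]
  simp only [← Finset.mul_sum, sum_norm_sq_eigenOverlap, mul_one]
  rfl

lemma relEnt_eq_sum :
    relEnt ρ σ = ∑ k, ∑ l, hρ.eigenvalues l * ‖eigenOverlap hσ hρ k l‖ ^ 2 *
      (Real.log (hρ.eigenvalues l) - Real.log (hσ.eigenvalues k)) + σ.trace.re - ρ.trace.re := by
  have hρρ := trace_conj_diagonal_mul_conj_diagonal (U := hρ.eigenvectorUnitary)
    (V := hρ.eigenvectorUnitary) hρ.eigenvalues (Real.log ∘ hρ.eigenvalues)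
  have hρσ := trace_conj_diagonal_mul_conj_diagonal (U := hσ.eigenvectorUnitary)
    (V := hρ.eigenvectorUnitary) hρ.eigenvalues (Real.log ∘ hσ.eigenvalues)
  rw [← hρ.eq_conj_diagonal, ← hρ.matLog_eq] at hρρ
  rw [← hρ.eq_conj_diagonal, ← hσ.matLog_eq] at hρσ
  rw [relEnt, Matrix.mul_sub, Matrix.trace_sub, Complex.sub_re, Complex.add_re, Complex.sub_re,
    hρρ, hρσ, Complex.ofReal_re, Complex.ofReal_re]
  have hself : ∑ k, ∑ l, hρ.eigenvalues l *
      ‖(star (hρ.eigenvectorUnitary : Matrix n n ℂ) * hρ.eigenvectorUnitary) k l‖ ^ 2 *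
      (Real.log ∘ hρ.eigenvalues) k =
      ∑ k, ∑ l, hρ.eigenvalues l * ‖eigenOverlap hσ hρ k l‖ ^ 2 * Real.log (hρ.eigenvalues l) := by
    calc _ = ∑ l, hρ.eigenvalues l * Real.log (hρ.eigenvalues l) := by
          simp [one_apply, apply_ite]
      _ = _ := by
          rw [Finset.sum_comm]
          simp only [← Finset.sum_mul, ← Finset.mul_sum, sum_norm_sq_eigenOverlap, mul_one]
  rw [hself]
  simp only [eigenOverlap, Function.comp_apply, mul_sub, Finset.sum_sub_distrib]

lemma resolventForm_eigenbasis (s : ℝ) (Z : Matrix n n ℂ) :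
    resolventForm s ρ σ
        (hσ.eigenvectorUnitary * Z * star (hρ.eigenvectorUnitary : Matrix n n ℂ)) =
      ∑ k, ∑ l, (2 * (star (Z k l) * (eigenOverlap hσ hρ k l * hρ.eigenvalues l)).re
        - (hσ.eigenvalues k + s * hρ.eigenvalues l) * ‖Z k l‖ ^ 2) := by
  have h := resolventForm_conj hσ.eigenvectorUnitary.2 hρ.eigenvectorUnitary.2
    hσ.eigenvalues hρ.eigenvalues s Z
  rwa [← hρ.eq_conj_diagonal, ← hσ.eq_conj_diagonal] at h

lemma eigenOverlap_mul_eigenvalue_eq_zero (hsupp : suppLE ρ σ) {k : n}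
    (hk : hσ.eigenvalues k = 0) (l : n) : eigenOverlap hσ hρ k l * hρ.eigenvalues l = 0 := by
  set U : Matrix n n ℂ := (hσ.eigenvectorUnitary : Matrix n n ℂ)
  set V : Matrix n n ℂ := (hρ.eigenvectorUnitary : Matrix n n ℂ)
  have hρU : ∀ i, (ρ * U) i k = 0 := by
    have hσu : σ *ᵥ ⇑(hσ.eigenvectorBasis k) = 0 := by
      rw [hσ.mulVec_eigenvectorBasis, hk, zero_smul]
    intro i
    simpa [U, mul_apply, mulVec, dotProduct] using congr_fun (hsupp _ hσu) i
  have hC : eigenOverlap hσ hρ * diagonal (RCLike.ofReal ∘ hρ.eigenvalues) = star (ρ * U) * V := by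
    rw [star_mul, show star ρ = ρ from hρ.eq]
    conv_rhs => rw [hρ.eq_conj_diagonal]
    simp only [eigenOverlap, U, V, Matrix.mul_assoc, Unitary.coe_star_mul_self, Matrix.mul_one]
  have h := congr_fun₂ hC k l
  simp only [mul_diagonal, Function.comp_apply, Complex.coe_algebraMap] at h
  rw [h, mul_apply]
  simp [hρU]

end Spectral

section Resolvent

variable {n : Type*} [Fintype n] [DecidableEq n] {ρ σ : Matrix n n ℂ}

noncomputable def resolventValue (s : ℝ) (ρ σ : Matrix n n ℂ) : ℝ :=
  ⨆ Y, resolventForm s ρ σ Y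

lemma isGreatest_resolventForm (hρ : ρ.PosSemidef) (hσ : σ.PosSemidef) {s : ℝ} (hs : 0 < s) :
    IsGreatest (Set.range (resolventForm s ρ σ))
      (∑ k, ∑ l, ‖eigenOverlap hσ.1 hρ.1 k l * hρ.1.eigenvalues l‖ ^ 2 /
        (hσ.1.eigenvalues k + s * hρ.1.eigenvalues l)) := by
  set U : Matrix n n ℂ := (hσ.1.eigenvectorUnitary : Matrix n n ℂ)
  set V : Matrix n n ℂ := (hρ.1.eigenvectorUnitary : Matrix n n ℂ)
  have hd : ∀ k l, 0 ≤ hσ.1.eigenvalues k + s * hρ.1.eigenvalues l := fun k l => by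
    have := hσ.eigenvalues_nonneg k
    have := hρ.eigenvalues_nonneg l
    positivity
  have hx : ∀ k l, hσ.1.eigenvalues k + s * hρ.1.eigenvalues l = 0 →
      eigenOverlap hσ.1 hρ.1 k l * hρ.1.eigenvalues l = 0 := fun k l h => by
    have := hσ.eigenvalues_nonneg k
    have := hρ.eigenvalues_nonneg l
    have : hρ.1.eigenvalues l = 0 := by nlinarith
    simp [this]
  refine ⟨⟨U * Matrix.of (fun k l => eigenOverlap hσ.1 hρ.1 k l * hρ.1.eigenvalues l /
      ((hσ.1.eigenvalues k + s * hρ.1.eigenvalues l : ℝ) : ℂ)) * star V, ?_⟩, ?_⟩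
  · rw [resolventForm_eigenbasis]
    exact Finset.sum_congr rfl fun k _ => Finset.sum_congr rfl fun l _ =>
      Complex.two_mul_re_sub_eq_norm_sq_div _ _
  · rintro _ ⟨Y, rfl⟩
    have hY : Y = U * (star U * Y * V) * star V := by
      rw [← Matrix.mul_assoc, ← Matrix.mul_assoc, mem_unitaryGroup_iff.mp hσ.1.eigenvectorUnitary.2,
        Matrix.one_mul, Matrix.mul_assoc, mem_unitaryGroup_iff.mp hρ.1.eigenvectorUnitary.2,
        Matrix.mul_one]
    rw [hY, resolventForm_eigenbasis]
    exact Finset.sum_le_sum fun k _ => Finset.sum_le_sum fun l _ =>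
      Complex.two_mul_re_sub_le_norm_sq_div (hd k l) (hx k l) _

lemma resolventValue_eq_sum (hρ : ρ.PosSemidef) (hσ : σ.PosSemidef) {s : ℝ} (hs : 0 < s) :
    resolventValue s ρ σ =
      ∑ k, ∑ l, ‖eigenOverlap hσ.1 hρ.1 k l * hρ.1.eigenvalues l‖ ^ 2 /
        (hσ.1.eigenvalues k + s * hρ.1.eigenvalues l) :=
  (isGreatest_resolventForm hρ hσ hs).csSup_eq

lemma eigenvalue_mul_norm_sq_eigenOverlap_eq_zero_or_pos (hρ : ρ.PosSemidef)
    (hσ : σ.PosSemidef) (hsupp : suppLE ρ σ) (k l : n) :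
    hρ.1.eigenvalues l * ‖eigenOverlap hσ.1 hρ.1 k l‖ ^ 2 = 0 ∨
      0 < hσ.1.eigenvalues k ∧ 0 < hρ.1.eigenvalues l := by
  rcases (hσ.eigenvalues_nonneg k).eq_or_lt with hμ | hμ
  · rcases mul_eq_zero.mp (eigenOverlap_mul_eigenvalue_eq_zero hρ.1 hσ.1 hsupp hμ.symm l)
      with h | h
    · simp [h]
    · simp [Complex.ofReal_eq_zero.mp h]
  rcases (hρ.eigenvalues_nonneg l).eq_or_lt with hν | hν
  · simp [← hν]
  · exact Or.inr ⟨hμ, hν⟩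

lemma relEnt_eq_integral (hρ : ρ.PosSemidef) (hσ : σ.PosSemidef) (hsupp : suppLE ρ σ) :
    IntegrableOn (fun s => resolventValue s ρ σ - ρ.trace.re / (1 + s)) (Set.Ioi 0) ∧
      relEnt ρ σ = (∫ s in Set.Ioi 0, (resolventValue s ρ σ - ρ.trace.re / (1 + s))) +
        σ.trace.re - ρ.trace.re := by
  have hw := eigenvalue_mul_norm_sq_eigenOverlap_eq_zero_or_pos hρ hσ hsupp
  set μ := hσ.1.eigenvalues
  set ν := hρ.1.eigenvalues
  set w : n → n → ℝ := fun k l => ν l * ‖eigenOverlap hσ.1 hρ.1 k l‖ ^ 2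
  set f : n → n → ℝ → ℝ := fun k l s => w k l * (ν l / (μ k + s * ν l) - 1 / (1 + s))
  have hf : ∀ k l, IntegrableOn (f k l) (Set.Ioi 0) ∧
      ∫ s in Set.Ioi 0, f k l s = w k l * (Real.log (ν l) - Real.log (μ k)) := fun k l => by
    rcases hw k l with h | ⟨hμ, hν⟩
    · simp [f, w, h]
    · exact ⟨(integrableOn_div_add_mul_sub_one_div hμ hν).const_mul _,
        by rw [integral_const_mul, integral_div_add_mul_sub_one_div hμ hν]⟩
  have heq : Set.EqOn (fun s => resolventValue s ρ σ - ρ.trace.re / (1 + s))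
      (fun s => ∑ k, ∑ l, f k l s) (Set.Ioi 0) := fun s (hs : 0 < s) => by
    simp only [resolventValue_eq_sum hρ hσ hs, re_trace_eq_sum_eigenOverlap hρ.1 hσ.1,
      Finset.sum_div, ← Finset.sum_sub_distrib, f, w]
    refine Finset.sum_congr rfl fun k _ => Finset.sum_congr rfl fun l _ => ?_
    rw [norm_mul, Complex.norm_real, Real.norm_eq_abs, mul_pow, sq_abs]
    ring
  have hrow : ∀ k, IntegrableOn (fun s => ∑ l, f k l s) (Set.Ioi 0) :=
    fun k => integrable_finsetSum _ fun l _ => (hf k l).1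
  have hsum : IntegrableOn (fun s => ∑ k, ∑ l, f k l s) (Set.Ioi 0) :=
    integrable_finsetSum _ fun k _ => hrow k
  refine ⟨hsum.congr_fun heq.symm measurableSet_Ioi, ?_⟩
  rw [setIntegral_congr_fun measurableSet_Ioi heq, integral_finsetSum _ fun k _ => hrow k,
    relEnt_eq_sum hρ.1 hσ.1]
  congr 2
  refine Finset.sum_congr rfl fun k _ => ?_
  rw [integral_finsetSum _ fun l _ => (hf k l).1]
  exact Finset.sum_congr rfl fun l _ => ((hf k l).2).symm

end Resolvent

lemma suppLE_sum_conjTranspose_mul_mul {m n ι : Type*} [Fintype m] [DecidableEq m] [Fintype n]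
    [DecidableEq n] {ρ σ : Matrix n n ℂ} (hσ : σ.PosSemidef) (h : suppLE ρ σ) (s : Finset ι)
    (B : ι → Matrix n m ℂ) :
    suppLE (∑ i ∈ s, (B i)ᴴ * ρ * B i) (∑ i ∈ s, (B i)ᴴ * σ * B i) := by
  intro v hv
  have hquad : ∀ i, star (B i *ᵥ v) ⬝ᵥ σ *ᵥ (B i *ᵥ v) = star v ⬝ᵥ ((B i)ᴴ * σ * B i) *ᵥ v :=
    fun i => by simp only [star_mulVec, dotProduct_mulVec, vecMul_vecMul]
  have hσB : ∀ i ∈ s, σ *ᵥ (B i *ᵥ v) = 0 := by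
    have hsum : ∑ i ∈ s, star (B i *ᵥ v) ⬝ᵥ σ *ᵥ (B i *ᵥ v) = 0 := by
      simp only [hquad, ← dotProduct_sum, ← sum_mulVec, hv, dotProduct_zero]
    intro i hi
    rw [← hσ.dotProduct_mulVec_zero_iff]
    exact (Finset.sum_eq_zero_iff_of_nonneg fun j _ => hσ.dotProduct_mulVec_nonneg _).mp hsum i hi
  rw [sum_mulVec]
  exact Finset.sum_eq_zero fun i hi => by
    rw [← mulVec_mulVec, ← mulVec_mulVec, h _ (hσB i hi), mulVec_zero]

def tensorSingle (a : Type*) {b : Type*} [DecidableEq a] [DecidableEq b] (k : b) :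
    Matrix (a × b) a ℂ :=
  Matrix.of fun p i => if p = (i, k) then 1 else 0

section PartialTrace

variable {a b : Type*} [Fintype a] [Fintype b]

lemma trace_ptraceB (ρ : Matrix (a × b) (a × b) ℂ) : (ptraceB ρ).trace = ρ.trace := by
  simp only [Matrix.trace, diag_apply, ptraceB, of_apply, Fintype.sum_prod_type]

variable [DecidableEq b]

lemma trace_kronecker_one_mul (W : Matrix a a ℂ) (ρ : Matrix (a × b) (a × b) ℂ) :
    ((W ⊗ₖ (1 : Matrix b b ℂ)) * ρ).trace = (W * ptraceB ρ).trace := by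
  simp only [Matrix.trace, diag_apply, mul_apply, kroneckerMap_apply, one_apply, ptraceB, of_apply,
    Fintype.sum_prod_type, mul_ite, mul_zero, mul_one, ite_mul, zero_mul, Finset.sum_ite_eq,
    Finset.mem_univ, if_true, Finset.mul_sum]
  exact Finset.sum_congr rfl fun i _ => Finset.sum_comm

lemma resolventForm_kronecker_one (s : ℝ) (ρ σ : Matrix (a × b) (a × b) ℂ) (X : Matrix a a ℂ) :
    resolventForm s ρ σ (X ⊗ₖ (1 : Matrix b b ℂ)) =
      resolventForm s (ptraceB ρ) (ptraceB σ) X := by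
  have hstar : star (X ⊗ₖ (1 : Matrix b b ℂ)) = star X ⊗ₖ (1 : Matrix b b ℂ) := by
    simp only [star_eq_conjTranspose, conjTranspose_kronecker, conjTranspose_one]
  rw [resolventForm, resolventForm, hstar, Matrix.trace_mul_cycle, ← mul_kronecker_mul,
    ← mul_kronecker_mul, Matrix.one_mul, trace_kronecker_one_mul, trace_kronecker_one_mul,
    trace_kronecker_one_mul, Matrix.trace_mul_cycle (star X) (ptraceB σ) X]

variable [DecidableEq a]

lemma ptraceB_eq_sum (ρ : Matrix (a × b) (a × b) ℂ) :
    ptraceB ρ = ∑ k : b, (tensorSingle a k)ᴴ * ρ * tensorSingle a k := by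
  ext i j
  simp [ptraceB, tensorSingle, mul_apply, Matrix.sum_apply]

lemma Matrix.PosSemidef.ptraceB {ρ : Matrix (a × b) (a × b) ℂ} (hρ : ρ.PosSemidef) :
    (ptraceB ρ).PosSemidef := by
  rw [ptraceB_eq_sum]
  exact posSemidef_sum _ fun k _ => hρ.conjTranspose_mul_mul_same _

lemma suppLE_ptraceB {ρ σ : Matrix (a × b) (a × b) ℂ} (hσ : σ.PosSemidef) (h : suppLE ρ σ) :
    suppLE (ptraceB ρ) (ptraceB σ) := by
  rw [ptraceB_eq_sum, ptraceB_eq_sum]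
  exact suppLE_sum_conjTranspose_mul_mul hσ h _ _

lemma resolventValue_ptraceB_le {ρ σ : Matrix (a × b) (a × b) ℂ} (hρ : ρ.PosSemidef)
    (hσ : σ.PosSemidef) {s : ℝ} (hs : 0 < s) :
    resolventValue s (ptraceB ρ) (ptraceB σ) ≤ resolventValue s ρ σ :=
  ciSup_le fun X => resolventForm_kronecker_one s ρ σ X ▸
    le_ciSup (isGreatest_resolventForm hρ hσ hs).bddAbove _

end PartialTrace

theorem relEntE_ptraceB_le_general {a b : Type*} [Fintype a] [DecidableEq a]
    [Fintype b] [DecidableEq b]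
    (ρ σ : Matrix (a × b) (a × b) ℂ)
    (hρ : ρ.PosSemidef)
    (hσ : σ.PosSemidef) :
    relEntE (ptraceB ρ) (ptraceB σ) ≤ relEntE ρ σ := by
  by_cases hsupp : suppLE ρ σ
  · have hsuppB := suppLE_ptraceB hσ hsupp
    obtain ⟨hint, hval⟩ := relEnt_eq_integral hρ hσ hsupp
    obtain ⟨hintB, hvalB⟩ := relEnt_eq_integral hρ.ptraceB hσ.ptraceB hsuppB
    rw [trace_ptraceB] at hintB
    rw [relEntE, relEntE, if_pos hsupp, if_pos hsuppB, EReal.coe_le_coe_iff, hval, hvalB,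
      trace_ptraceB, trace_ptraceB]
    gcongr ?_ + _ - _
    exact setIntegral_mono_on hintB hint measurableSet_Ioi fun s hs =>
      sub_le_sub_right (resolventValue_ptraceB_le hρ hσ hs) _
  · simp only [relEntE, if_neg hsupp, le_top]

/-- Monotonicity of the quantum relative entropy under the partial trace: for density
matrices `ρ, σ` on `H_A ⊗ H_B`, `D(Tr_B ρ ‖ Tr_B σ) ≤ D(ρ ‖ σ)`. -/
theorem relEntE_ptraceB_le {a b : Type*} [Fintype a] [DecidableEq a]
    [Fintype b] [DecidableEq b]
    (ρ σ : Matrix (a × b) (a × b) ℂ)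
    (hρ : ρ.PosSemidef) (hρtr : ρ.trace = 1)
    (hσ : σ.PosSemidef) (hσtr : σ.trace = 1) :
    relEntE (ptraceB ρ) (ptraceB σ) ≤ relEntE ρ σ :=
  relEntE_ptraceB_le_general ρ σ hρ hσ
end
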